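/- arXiv:0802.0467 — 4 statements merged into one kernel-verified Lean document; each statement's English description precedes it below -/
import Mathlib

section
/- Let [x,y] be a geodesic, let p be a nearest point on [x,y] to a point a, and let q be a nearest point on [x,y] to a point b, and let [a,p] and [b,q] be geodesics realizing these nearest point projections. If d(p,q) > 14δ, then the 2δ-neighbourhoods of [a,p] and [b,q] are disjoint. -/
open Metric Set

/-- `G` is a geodesic segment from `x` to `y`: the image of an isometric embedding of
the interval `[0, dist x y]` sending the endpoints to `x` and `y`. -/
def IsGeodesic {X : Type*} [MetricSpace X] (G : Set X) (x y : X) : Prop :=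
  ∃ f : ℝ → X, f 0 = x ∧ f (dist x y) = y ∧
    (∀ s ∈ Set.Icc (0 : ℝ) (dist x y), ∀ t ∈ Set.Icc (0 : ℝ) (dist x y),
      dist (f s) (f t) = |s - t|) ∧
    f '' Set.Icc (0 : ℝ) (dist x y) = G

/-- The closed `K`-neighbourhood of a set `S`: all points within distance `K` of `S`. -/
def nbhd {X : Type*} [MetricSpace X] (K : ℝ) (S : Set X) : Set X :=
  {w | Metric.infDist w S ≤ K}

/-- The space is geodesic: any two points are joined by a geodesic segment. -/
def GeodesicSpace (X : Type*) [MetricSpace X] : Prop :=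
  ∀ x y : X, ∃ G : Set X, IsGeodesic G x y

/-- Every geodesic triangle is `δ`-slim: each side is contained in the
`δ`-neighbourhood of the union of the other two sides. -/
def SlimTriangles (δ : ℝ) (X : Type*) [MetricSpace X] : Prop :=
  ∀ (x y z : X) (Gxy Gyz Gzx : Set X),
    IsGeodesic Gxy x y → IsGeodesic Gyz y z → IsGeodesic Gzx z x →
    Gxy ⊆ nbhd δ (Gyz ∪ Gzx)

/-- `p` is a nearest point on `S` to `z`. -/
def NearestPoint {X : Type*} [MetricSpace X] (S : Set X) (z p : X) : Prop :=
  p ∈ S ∧ dist z p = Metric.infDist z S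

/-- The halfspace `H(a,b)`: points at least as close to `b` as to `a`. -/
def Halfspace {X : Type*} [MetricSpace X] (a b : X) : Set X :=
  {w | dist w b ≤ dist w a}

lemma geod_mem_left {X : Type*} [MetricSpace X] {G : Set X} {x y : X}
    (h : IsGeodesic G x y) : x ∈ G := by
  obtain ⟨f, h0, hD, hiso, himg⟩ := h
  exact himg ▸ ⟨0, ⟨le_refl 0, dist_nonneg⟩, h0⟩

lemma geod_mem_right {X : Type*} [MetricSpace X] {G : Set X} {x y : X}
    (h : IsGeodesic G x y) : y ∈ G := by
  obtain ⟨f, h0, hD, hiso, himg⟩ := h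
  exact himg ▸ ⟨dist x y, ⟨dist_nonneg, le_refl _⟩, hD⟩

lemma geod_between {X : Type*} [MetricSpace X] {G : Set X} {x y u : X}
    (h : IsGeodesic G x y) (hu : u ∈ G) : dist x u + dist u y = dist x y := by
  obtain ⟨f, h0, hD, hiso, himg⟩ := h
  rw [← himg] at hu
  obtain ⟨s, hs, rfl⟩ := hu
  have h1 : dist x (f s) = s := by
    rw [← h0, hiso 0 ⟨le_refl 0, dist_nonneg⟩ s hs, abs_of_nonpos (by linarith [hs.1])]; ring
  have h2 : dist (f s) y = dist x y - s := by
    conv_lhs => rw [← hD]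
    rw [hiso s hs (dist x y) ⟨dist_nonneg, le_refl _⟩,
      abs_of_nonpos (by linarith [hs.2])]; ring
  rw [h1, h2]; ring

lemma geod_dist_le {X : Type*} [MetricSpace X] {G : Set X} {x y u v : X}
    (h : IsGeodesic G x y) (hu : u ∈ G) (hv : v ∈ G) : dist u v ≤ dist x y := by
  obtain ⟨f, h0, hD, hiso, himg⟩ := h
  rw [← himg] at hu hv
  obtain ⟨s, hs, rfl⟩ := hu
  obtain ⟨t, ht, rfl⟩ := hv
  rw [hiso s hs t ht, abs_sub_le_iff]
  constructor <;> linarith [hs.1, hs.2, ht.1, ht.2]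

lemma geod_rev {X : Type*} [MetricSpace X] {G : Set X} {x y : X}
    (h : IsGeodesic G x y) : IsGeodesic G y x := by
  obtain ⟨f, h0, hD, hiso, himg⟩ := h
  refine ⟨fun t => f (dist x y - t), by simpa using hD, ?_, ?_, ?_⟩
  · rw [dist_comm y x]; simpa using h0
  · intro s hs t ht
    rw [dist_comm y x] at hs ht
    rw [hiso _ ⟨by linarith [hs.2], by linarith [hs.1]⟩ _ ⟨by linarith [ht.2], by linarith [ht.1]⟩]
    rw [abs_sub_comm]; ring_nf
  · rw [dist_comm y x, ← himg, ← Set.image_image f (fun t => dist x y - t),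
      Set.image_const_sub_Icc]
    norm_num

lemma geod_core {X : Type*} [MetricSpace X] {f : ℝ → X} {D : ℝ}
    (hiso : ∀ s ∈ Set.Icc (0:ℝ) D, ∀ t ∈ Set.Icc (0:ℝ) D, dist (f s) (f t) = |s - t|)
    {s t : ℝ} (hs : s ∈ Set.Icc (0:ℝ) D) (ht : t ∈ Set.Icc (0:ℝ) D) (hst : s ≤ t) :
    IsGeodesic (f '' Set.Icc s t) (f s) (f t) := by
  have hd : dist (f s) (f t) = t - s := by
    rw [hiso s hs t ht, abs_of_nonpos (by linarith)]; ring
  have hmem : ∀ r ∈ Set.Icc (0:ℝ) (t - s), s + r ∈ Set.Icc (0:ℝ) D := by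
    intro r hr
    exact ⟨by linarith [hs.1, hr.1], by linarith [hr.2, ht.2]⟩
  refine ⟨fun r => f (s + r), by norm_num, ?_, ?_, ?_⟩
  · rw [hd]; ring_nf
  · intro r1 hr1 r2 hr2
    rw [hd] at hr1 hr2
    rw [hiso _ (hmem r1 hr1) _ (hmem r2 hr2)]
    ring_nf
  · rw [hd, ← Set.image_image f (fun r => s + r), Set.image_const_add_Icc]
    norm_num

lemma geod_sub {X : Type*} [MetricSpace X] {G : Set X} {x y p q : X}
    (h : IsGeodesic G x y) (hp : p ∈ G) (hq : q ∈ G) :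
    ∃ G' : Set X, G' ⊆ G ∧ IsGeodesic G' p q := by
  obtain ⟨f, h0, hD, hiso, himg⟩ := h
  rw [← himg] at hp hq
  obtain ⟨s, hs, rfl⟩ := hp
  obtain ⟨t, ht, rfl⟩ := hq
  rcases le_total s t with hst | hst
  · refine ⟨f '' Set.Icc s t, ?_, geod_core hiso hs ht hst⟩
    rw [← himg]
    exact Set.image_mono (Set.Icc_subset_Icc hs.1 ht.2)
  · refine ⟨f '' Set.Icc t s, ?_, geod_rev (geod_core hiso ht hs hst)⟩
    rw [← himg]
    exact Set.image_mono (Set.Icc_subset_Icc ht.1 hs.2)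

lemma geod_point {X : Type*} [MetricSpace X] {G : Set X} {x y : X}
    (h : IsGeodesic G x y) {r : ℝ} (hr : r ∈ Set.Icc 0 (dist x y)) :
    ∃ m ∈ G, dist x m = r := by
  obtain ⟨f, h0, hD, hiso, himg⟩ := h
  refine ⟨f r, himg ▸ ⟨r, hr, rfl⟩, ?_⟩
  rw [← h0, hiso 0 ⟨le_refl 0, dist_nonneg⟩ r hr, abs_of_nonpos (by linarith [hr.1])]
  ring

lemma nearest_of_geod {X : Type*} [MetricSpace X] {Gxy Gap : Set X} {a p u m : X}
    (hp : NearestPoint Gxy a p) (hGap : IsGeodesic Gap a p) (hu : u ∈ Gap) (hm : m ∈ Gxy) :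
    dist u p ≤ dist u m := by
  have h1 := geod_between hGap hu
  have h2 : dist a p ≤ dist a m := by
    rw [hp.2]; exact Metric.infDist_le_dist_of_mem hm
  have h3 : dist a m ≤ dist a u + dist u m := dist_triangle a u m
  linarith

/-- Let [x,y] be a geodesic, p a nearest point on [x,y] to a, q a nearest
point on [x,y] to b, and let [a,p], [b,q] be geodesics realizing these nearest point
projections. If d(p,q) > 14δ, then the 2δ-neighbourhoods of [a,p] and [b,q] are
disjoint. -/
theorem stmt_4 {X : Type*} [MetricSpace X] (δ : ℝ) (hδ : 0 ≤ δ)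
    (hGeo : GeodesicSpace X) (hyp : SlimTriangles δ X)
    (x y a b : X) (Gxy : Set X) (hGxy : IsGeodesic Gxy x y)
    (p q : X) (hp : NearestPoint Gxy a p) (hq : NearestPoint Gxy b q)
    (Gap Gbq : Set X) (hGap : IsGeodesic Gap a p) (hGbq : IsGeodesic Gbq b q)
    (hpq : 14 * δ < dist p q) :
    Disjoint (nbhd (2 * δ) Gap) (nbhd (2 * δ) Gbq) := by
  rw [Set.disjoint_left]
  rintro w hw1 hw2
  simp only [nbhd, Set.mem_setOf_eq] at hw1 hw2
  set D := dist p q with hD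
  set ε := (D - 14 * δ) / 13 with hε
  have hε0 : 0 < ε := by rw [hε]; linarith
  -- points u ∈ Gap, v ∈ Gbq near w
  obtain ⟨u, huGap, hwu⟩ := (Metric.infDist_lt_iff ⟨a, geod_mem_left hGap⟩).mp
    (lt_of_le_of_lt hw1 (by linarith : 2 * δ < 2 * δ + ε))
  obtain ⟨v, hvGbq, hwv⟩ := (Metric.infDist_lt_iff ⟨b, geod_mem_left hGbq⟩).mp
    (lt_of_le_of_lt hw2 (by linarith : 2 * δ < 2 * δ + ε))
  have huv : dist u v < 4 * δ + 2 * ε := by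
    calc dist u v ≤ dist u w + dist w v := dist_triangle u w v
    _ = dist w u + dist w v := by rw [dist_comm u w]
    _ < 4 * δ + 2 * ε := by linarith
  -- sub-geodesics and new geodesics
  obtain ⟨Gpq, hGpqsub, hGpq⟩ := geod_sub hGxy hp.1 hq.1
  obtain ⟨Gup, hGupsub, hGup⟩ := geod_sub hGap huGap (geod_mem_right hGap)
  obtain ⟨Gvq, hGvqsub, hGvq⟩ := geod_sub hGbq hvGbq (geod_mem_right hGbq)
  obtain ⟨Gqu, hGqu⟩ := hGeo q u
  obtain ⟨Guv, hGuv⟩ := hGeo u v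
  have slim1 := hyp p q u Gpq Gqu Gup hGpq hGqu hGup
  have slim2 := hyp q u v Gqu Guv Gvq hGqu hGuv hGvq
  have hDpq : dist p q = D := rfl
  -- key claim
  have key : ∀ m ∈ Gpq, 2 * δ + 2 * ε ≤ dist p m → 4 * δ + 4 * ε ≤ dist m q →
      ∃ z ∈ Guv, dist m z < 2 * δ + 2 * ε := by
    intro m hm hmp hmq
    have h1 : Metric.infDist m (Gqu ∪ Gup) ≤ δ := slim1 hm
    obtain ⟨c, hc, hmc⟩ := (Metric.infDist_lt_iff
      (Set.Nonempty.inl ⟨q, geod_mem_left hGqu⟩)).mp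
      (lt_of_le_of_lt h1 (by linarith : δ < δ + ε))
    rcases hc with hc | hc
    · -- c ∈ Gqu : apply second triangle
      have h2 : Metric.infDist c (Guv ∪ Gvq) ≤ δ := slim2 hc
      obtain ⟨z, hz, hcz⟩ := (Metric.infDist_lt_iff
        (Set.Nonempty.inl ⟨u, geod_mem_left hGuv⟩)).mp
        (lt_of_le_of_lt h2 (by linarith : δ < δ + ε))
      rcases hz with hz | hz
      · exact ⟨z, hz, by calc dist m z ≤ dist m c + dist c z := dist_triangle m c z
          _ < 2 * δ + 2 * ε := by linarith⟩
      · -- z ∈ Gvq ⊆ Gbq : contradiction with q nearest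
        exfalso
        have hzq : dist z q ≤ dist z m :=
          nearest_of_geod hq hGbq (hGvqsub hz) (hGpqsub hm)
        have hmz : dist m z ≤ dist m c + dist c z := dist_triangle m c z
        have : dist m q ≤ dist m z + dist z q := dist_triangle m z q
        rw [dist_comm z m] at hzq
        linarith
    · -- c ∈ Gup ⊆ Gap : contradiction with p nearest
      exfalso
      have hcp : dist c p ≤ dist c m :=
        nearest_of_geod hp hGap (hGupsub hc) (hGpqsub hm)
      have : dist p m ≤ dist p c + dist c m := dist_triangle p c m
      rw [dist_comm p c, dist_comm c m] at this
      rw [dist_comm c m] at hcp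
      linarith
  -- pick m1, m2 on Gpq
  obtain ⟨m1, hm1G, hm1p⟩ := geod_point hGpq (r := 2 * δ + 2 * ε)
    ⟨by linarith, by rw [hDpq]; linarith⟩
  obtain ⟨m2, hm2G, hm2p⟩ := geod_point hGpq (r := D - (4 * δ + 4 * ε))
    ⟨by linarith, by rw [hDpq]; linarith⟩
  have hm1q : dist m1 q = D - (2 * δ + 2 * ε) := by
    have := geod_between hGpq hm1G; rw [hDpq] at this; linarith
  have hm2q : dist m2 q = 4 * δ + 4 * ε := by
    have := geod_between hGpq hm2G; rw [hDpq] at this; linarith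
  obtain ⟨z1, hz1, hm1z1⟩ := key m1 hm1G (by rw [hm1p]) (by rw [hm1q]; linarith)
  obtain ⟨z2, hz2, hm2z2⟩ := key m2 hm2G (by rw [hm2p]; linarith) (by rw [hm2q])
  have hz12 : dist z1 z2 ≤ dist u v := geod_dist_le hGuv hz1 hz2
  have chain : D ≤ dist p m1 + dist m1 z1 + dist z1 z2 + dist z2 m2 + dist m2 q := by
    calc D = dist p q := rfl
    _ ≤ dist p m1 + dist m1 q := dist_triangle p m1 q
    _ ≤ dist p m1 + (dist m1 z1 + dist z1 q) := by linarith [dist_triangle m1 z1 q]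
    _ ≤ dist p m1 + (dist m1 z1 + (dist z1 z2 + dist z2 q)) := by
        linarith [dist_triangle z1 z2 q]
    _ ≤ dist p m1 + dist m1 z1 + dist z1 z2 + dist z2 m2 + dist m2 q := by
        linarith [dist_triangle z2 m2 q]
  rw [dist_comm z2 m2] at chain
  linarith [hm1p, hm2q]
end

section
/- Let [a,b] be a geodesic and let [c,d] be a subgeodesic of [a,b] (a subsegment of [a,b] with endpoints c,d ∈ [a,b]). Let x be any point, let p be a nearest point on [a,b] to x, let q be a nearest point on [c,d] to x, and let r be a nearest point on [c,d] to p. Then d(q,r) ≤ 7δ; that is, nearest point projection to the subgeodesic agrees, up to error 7δ (a constant depending only on δ), with nearest point projection to [a,b] followed by nearest point projection to [c,d]. -/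
open Metric Set

lemma IsGeodesic.left_mem {X : Type*} [MetricSpace X] {G : Set X} {u v : X}
    (h : IsGeodesic G u v) : u ∈ G := by
  obtain ⟨f, h0, hD, _, him⟩ := h
  rw [← him]
  exact ⟨0, ⟨le_refl 0, dist_nonneg⟩, h0⟩

lemma IsGeodesic.right_mem {X : Type*} [MetricSpace X] {G : Set X} {u v : X}
    (h : IsGeodesic G u v) : v ∈ G := by
  obtain ⟨f, h0, hD, _, him⟩ := h
  rw [← him]
  exact ⟨dist u v, ⟨dist_nonneg, le_refl _⟩, hD⟩

lemma IsGeodesic.dist_add {X : Type*} [MetricSpace X] {G : Set X} {u v y : X}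
    (h : IsGeodesic G u v) (hy : y ∈ G) : dist u y + dist y v = dist u v := by
  obtain ⟨f, h0, hD, hiso, him⟩ := h
  rw [← him] at hy
  obtain ⟨t, ht, rfl⟩ := hy
  have h1 : dist u (f t) = |0 - t| := by
    rw [← h0]; exact hiso 0 ⟨le_refl 0, dist_nonneg⟩ t ht
  have h2 : dist (f t) v = |t - dist u v| := by
    have := hiso t ht (dist u v) ⟨dist_nonneg, le_refl _⟩
    rw [hD] at this; exact this
  rw [h1, h2, abs_of_nonpos (by linarith [ht.1]), abs_of_nonpos (by linarith [ht.2])]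
  ring

lemma subseg {X : Type*} [MetricSpace X] {f : ℝ → X} {L : ℝ}
    (hiso : ∀ s ∈ Icc (0:ℝ) L, ∀ t ∈ Icc (0:ℝ) L, dist (f s) (f t) = |s - t|)
    {u v : ℝ} (hu : u ∈ Icc (0:ℝ) L) (hv : v ∈ Icc (0:ℝ) L) :
    IsGeodesic (f '' Icc (min u v) (max u v)) (f u) (f v) := by
  have hd : dist (f u) (f v) = |u - v| := hiso u hu v hv
  rcases le_total u v with h | h
  · have habs : dist (f u) (f v) = v - u := by
      rw [hd, abs_of_nonpos (by linarith)]; ring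
    unfold IsGeodesic
    rw [habs, min_eq_left h, max_eq_right h]
    refine ⟨fun s => f (s + u), by simp, by show f (v - u + u) = f v; rw [show v - u + u = v by ring], ?_, ?_⟩
    · intro s hs t ht
      rw [hiso (s + u) ⟨by linarith [hs.1, hu.1], by linarith [hs.2, hv.2]⟩
        (t + u) ⟨by linarith [ht.1, hu.1], by linarith [ht.2, hv.2]⟩]
      congr 1; ring
    · rw [show (fun s => f (s + u)) = f ∘ (fun s => s + u) from rfl, image_comp,
        image_add_const_Icc]
      norm_num
  · have habs : dist (f u) (f v) = u - v := by
      rw [hd, abs_of_nonneg (by linarith)]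
    unfold IsGeodesic
    rw [habs, min_eq_right h, max_eq_left h]
    refine ⟨fun s => f (u - s), by simp, by show f (u - (u - v)) = f v; rw [show u - (u - v) = v by ring], ?_, ?_⟩
    · intro s hs t ht
      rw [hiso (u - s) ⟨by linarith [hs.2, hv.1], by linarith [hs.1, hu.2]⟩
        (u - t) ⟨by linarith [ht.2, hv.1], by linarith [ht.1, hu.2]⟩,
        show u - s - (u - t) = -(s - t) by ring, abs_neg]
    · rw [show (fun s => f (u - s)) = f ∘ (fun s => u - s) from rfl, image_comp,
        image_const_sub_Icc]
      norm_num

/-- Let [a,b] be a geodesic and [c,d] a subgeodesic of [a,b]. Let x be any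
point, p a nearest point on [a,b] to x, q a nearest point on [c,d] to x, and r a nearest
point on [c,d] to p. Then d(q,r) ≤ 7δ: nearest point projection to the subgeodesic
agrees, up to error 7δ, with nearest point projection to [a,b] followed by nearest
point projection to [c,d]. -/
theorem stmt_5 {X : Type*} [MetricSpace X] (δ : ℝ) (hδ : 0 ≤ δ)
    (hGeo : GeodesicSpace X) (hyp : SlimTriangles δ X)
    (a b c d : X) (Gab Gcd : Set X)
    (hGab : IsGeodesic Gab a b) (hGcd : IsGeodesic Gcd c d) (hsub : Gcd ⊆ Gab)
    (x p q r : X) (hp : NearestPoint Gab x p) (hq : NearestPoint Gcd x q)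
    (hr : NearestPoint Gcd p r) :
    dist q r ≤ 7 * δ := by
  obtain ⟨f, hf0, hfL, hfiso, hfim⟩ := hGab
  obtain ⟨g, hg0, hgM, hgiso, hgim⟩ := hGcd
  have hM0 : (0:ℝ) ∈ Icc (0:ℝ) (dist c d) := ⟨le_refl _, dist_nonneg⟩
  have hMM : dist c d ∈ Icc (0:ℝ) (dist c d) := ⟨dist_nonneg, le_refl _⟩
  -- the reparametrization φ
  have hφex : ∀ u : ℝ, ∃ t, u ∈ Icc (0:ℝ) (dist c d) →
      t ∈ Icc (0:ℝ) (dist a b) ∧ f t = g u := by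
    intro u
    by_cases hu : u ∈ Icc (0:ℝ) (dist c d)
    · have hgu : g u ∈ Gab := hsub (hgim ▸ mem_image_of_mem g hu)
      rw [← hfim] at hgu
      obtain ⟨t, ht, hft⟩ := hgu
      exact ⟨t, fun _ => ⟨ht, hft⟩⟩
    · exact ⟨0, fun h => absurd h hu⟩
  choose φ hφ using hφex
  have hφiso : ∀ u ∈ Icc (0:ℝ) (dist c d), ∀ v ∈ Icc (0:ℝ) (dist c d),
      |φ u - φ v| = |u - v| := by
    intro u hu v hv
    have h1 := hφ u hu; have h2 := hφ v hv
    have h3 := hfiso (φ u) h1.1 (φ v) h2.1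
    rw [h1.2, h2.2] at h3
    rw [← h3]; exact hgiso u hu v hv
  set sa := min (φ 0) (φ (dist c d)) with hsadef
  set sb := max (φ 0) (φ (dist c d)) with hsbdef
  have h0L := (hφ 0 hM0).1
  have hML := (hφ (dist c d) hMM).1
  have hsaL : sa ∈ Icc (0:ℝ) (dist a b) :=
    ⟨le_min h0L.1 hML.1, (min_le_left _ _).trans h0L.2⟩
  have hsbL : sb ∈ Icc (0:ℝ) (dist a b) :=
    ⟨le_trans h0L.1 (le_max_left _ _), max_le h0L.2 hML.2⟩
  have hMabs : |φ (dist c d) - φ 0| = dist c d := by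
    have := hφiso (dist c d) hMM 0 hM0
    rw [sub_zero, abs_of_nonneg dist_nonneg] at this
    exact this
  have hbet : ∀ u ∈ Icc (0:ℝ) (dist c d), φ u ∈ Icc sa sb := by
    intro u hu
    have h1 : |φ u - φ 0| = u := by
      have := hφiso u hu 0 hM0
      rw [sub_zero, abs_of_nonneg hu.1] at this; exact this
    have h2 : |φ (dist c d) - φ u| = dist c d - u := by
      rw [hφiso (dist c d) hMM u hu, abs_of_nonneg (by linarith [hu.2])]
    have key : (φ 0 ≤ φ u ∧ φ u ≤ φ (dist c d)) ∨
        (φ (dist c d) ≤ φ u ∧ φ u ≤ φ 0) := by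
      rcases abs_cases (φ u - φ 0) with ⟨e1, s1⟩ | ⟨e1, s1⟩ <;>
      rcases abs_cases (φ (dist c d) - φ u) with ⟨e2, s2⟩ | ⟨e2, s2⟩ <;>
      rcases abs_cases (φ (dist c d) - φ 0) with ⟨e3, s3⟩ | ⟨e3, s3⟩ <;>
      first
        | (left; exact ⟨by linarith, by linarith⟩)
        | (right; exact ⟨by linarith, by linarith⟩)
    rcases key with ⟨hk1, hk2⟩ | ⟨hk1, hk2⟩
    · exact ⟨(min_le_left _ _).trans hk1, hk2.trans (le_max_right _ _)⟩
    · exact ⟨(min_le_right _ _).trans hk1, hk2.trans (le_max_left _ _)⟩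
  have hGcdim : Gcd = f '' Icc sa sb := by
    rw [← hgim]
    apply Subset.antisymm
    · rintro z ⟨u, hu, rfl⟩
      exact ⟨φ u, hbet u hu, (hφ u hu).2⟩
    · rintro z ⟨t, ht, rfl⟩
      rcases le_total (φ 0) (φ (dist c d)) with hc | hc
      · have hsa : sa = φ 0 := min_eq_left hc
        have hsb : sb = φ (dist c d) := max_eq_right hc
        have hMc : dist c d = φ (dist c d) - φ 0 := by
          have h := hMabs; rw [abs_of_nonneg (by linarith)] at h; linarith
        have huM : t - φ 0 ∈ Icc (0:ℝ) (dist c d) := by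
          rw [hsa] at ht; constructor
          · linarith [ht.1]
          · rw [hsb] at ht; linarith [ht.2]
        have h1 : |φ (t - φ 0) - φ 0| = t - φ 0 := by
          have := hφiso (t - φ 0) huM 0 hM0
          rw [sub_zero, abs_of_nonneg huM.1] at this; exact this
        have hbu := hbet (t - φ 0) huM
        have heq : φ (t - φ 0) = t := by
          rcases abs_cases (φ (t - φ 0) - φ 0) with ⟨e1, s1⟩ | ⟨e1, s1⟩
          · linarith
          · have := hbu.1; rw [hsa] at this; linarith
        exact ⟨t - φ 0, huM, by rw [← (hφ _ huM).2, heq]⟩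
      · have hsa : sa = φ (dist c d) := min_eq_right hc
        have hsb : sb = φ 0 := max_eq_left hc
        have hMc : dist c d = φ 0 - φ (dist c d) := by
          have h := hMabs; rw [abs_of_nonpos (by linarith)] at h; linarith
        have huM : φ 0 - t ∈ Icc (0:ℝ) (dist c d) := by
          constructor
          · rw [hsb] at ht; linarith [ht.2]
          · rw [hsa] at ht; linarith [ht.1]
        have h1 : |φ (φ 0 - t) - φ 0| = φ 0 - t := by
          have := hφiso (φ 0 - t) huM 0 hM0
          rw [sub_zero, abs_of_nonneg huM.1] at this; exact this
        have hbu := hbet (φ 0 - t) huM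
        have heq : φ (φ 0 - t) = t := by
          rcases abs_cases (φ (φ 0 - t) - φ 0) with ⟨e1, s1⟩ | ⟨e1, s1⟩
          · have := hbu.2; rw [hsb] at this; linarith
          · linarith
        exact ⟨φ 0 - t, huM, by rw [← (hφ _ huM).2, heq]⟩
  -- parameters of q, r, p
  have hq1 : q ∈ f '' Icc sa sb := hGcdim ▸ hq.1
  obtain ⟨tq, htq, hftq⟩ := hq1
  have hr1 : r ∈ f '' Icc sa sb := hGcdim ▸ hr.1
  obtain ⟨tr, htr, hftr⟩ := hr1
  have hp1 : p ∈ f '' Icc (0:ℝ) (dist a b) := hfim ▸ hp.1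
  obtain ⟨tp, htp, hftp⟩ := hp1
  have hIccsub : Icc sa sb ⊆ Icc (0:ℝ) (dist a b) := Icc_subset_Icc hsaL.1 hsbL.2
  have htqL := hIccsub htq
  have htrL := hIccsub htr
  have hdqr : dist q r = |tq - tr| := by
    rw [← hftq, ← hftr]; exact hfiso _ htqL _ htrL
  have hdpr : dist p r = |tp - tr| := by
    rw [← hftp, ← hftr]; exact hfiso _ htp _ htrL
  have hdpq : dist p q = |tp - tq| := by
    rw [← hftp, ← hftq]; exact hfiso _ htp _ htqL
  -- tr lies between tp and tq
  have hprq : dist p r ≤ dist p q := by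
    rw [hr.2]; exact infDist_le_dist_of_mem hq.1
  have hin : sa ≤ tp → tp ≤ sb → tr = tp := by
    intro h1 h2
    have hfp : f tp ∈ Gcd := by rw [hGcdim]; exact ⟨tp, ⟨h1, h2⟩, rfl⟩
    have hle : dist p r ≤ dist p (f tp) := by
      rw [hr.2]; exact infDist_le_dist_of_mem hfp
    rw [hftp] at hle
    simp only [dist_self] at hle
    have : dist p r = 0 := le_antisymm hle dist_nonneg
    rw [hdpr] at this
    have := abs_eq_zero.mp this
    linarith
  have hbtr : min tp tq ≤ tr ∧ tr ≤ max tp tq := by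
    have hkey := hprq
    rw [hdpr, hdpq] at hkey
    rcases le_total tp tq with h | h
    · have l1 : tr - tp ≤ |tp - tr| := by rw [abs_sub_comm]; exact le_abs_self _
      have l2 : |tp - tq| = tq - tp := by rw [abs_of_nonpos (by linarith)]; ring
      have h2 : tr ≤ tq := by linarith
      have h1 : tp ≤ tr := by
        by_contra hcon
        push_neg at hcon
        have heq := hin (htr.1.trans hcon.le) (h.trans htq.2)
        linarith
      exact ⟨(min_le_left tp tq).trans h1, h2.trans (le_max_right tp tq)⟩
    · have l1 : tp - tr ≤ |tp - tr| := le_abs_self _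
      have l2 : |tp - tq| = tp - tq := abs_of_nonneg (by linarith)
      have h2 : tq ≤ tr := by linarith
      have h1 : tr ≤ tp := by
        by_contra hcon
        push_neg at hcon
        have heq := hin (htq.1.trans h) (hcon.le.trans htr.2)
        linarith
      exact ⟨(min_le_right tp tq).trans h2, h1.trans (le_max_left tp tq)⟩
  -- triangle p q x
  have hGpq : IsGeodesic (f '' Icc (min tp tq) (max tp tq)) p q := by
    rw [← hftp, ← hftq]; exact subseg hfiso htp htqL
  obtain ⟨Gqx, hGqx⟩ := hGeo q x
  obtain ⟨Gxp, hGxp⟩ := hGeo x p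
  have hslim1 : infDist r (Gqx ∪ Gxp) ≤ δ :=
    hyp p q x _ Gqx Gxp hGpq hGqx hGxp ⟨tr, ⟨hbtr.1, hbtr.2⟩, hftr⟩
  -- triangle q r x
  have hGqr : IsGeodesic (f '' Icc (min tq tr) (max tq tr)) q r := by
    rw [← hftq, ← hftr]; exact subseg hfiso htqL htrL
  obtain ⟨Grx, hGrx⟩ := hGeo r x
  obtain ⟨Gxq, hGxq⟩ := hGeo x q
  have hslim2 : ∀ s ∈ Icc (min tq tr) (max tq tr), infDist (f s) (Grx ∪ Gxq) ≤ δ :=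
    fun s hs => hyp q r x _ Grx Gxq hGqr hGrx hGxq ⟨s, hs, rfl⟩
  -- basic distance comparisons
  have hxp_le : dist x p ≤ dist x q := by
    rw [hp.2, hq.2]
    exact infDist_le_infDist_of_subset hsub ⟨q, hq.1⟩
  have hxq_le_xr : dist x q ≤ dist x r := by
    rw [hq.2]; exact infDist_le_dist_of_mem hr.1
  have hxq_le_m : ∀ s, sa ≤ s → s ≤ sb → dist x q ≤ dist x (f s) := by
    intro s h1 h2
    rw [hq.2]
    exact infDist_le_dist_of_mem (by rw [hGcdim]; exact ⟨s, ⟨h1, h2⟩, rfl⟩)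
  -- main ε-argument
  have main : ∀ ε > (0:ℝ), dist q r ≤ 6 * δ + ε := by
    intro ε hε
    have hne1 : (Gqx ∪ Gxp).Nonempty := ⟨x, Or.inr hGxp.left_mem⟩
    have h1 : infDist r (Gqx ∪ Gxp) < δ + ε / 8 :=
      lt_of_le_of_lt hslim1 (by linarith)
    obtain ⟨y, hy, hry⟩ := (infDist_lt_iff hne1).mp h1
    rcases hy with hy | hy
    · -- y on the side from q to x : done quickly
      have hsum := hGqx.dist_add hy
      have t1 : dist x r ≤ dist x y + dist y r := dist_triangle x y r
      have t2 : dist q r ≤ dist q y + dist y r := dist_triangle q y r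
      have c1 : dist y x = dist x y := dist_comm y x
      have c2 : dist q x = dist x q := dist_comm q x
      have c3 : dist y r = dist r y := dist_comm y r
      linarith
    · -- y on the side from x to p : then p is close to Gcd, use covering on [q,r]
      have hsum := hGxp.dist_add hy
      have hpr_small : dist p r ≤ 2 * δ + ε / 4 := by
        have t1 : dist x r ≤ dist x y + dist y r := dist_triangle x y r
        have t2 : dist p r ≤ dist p y + dist y r := dist_triangle p y r
        have c1 : dist y r = dist r y := dist_comm y r
        have c2 : dist p y = dist y p := dist_comm p y
        linarith
      by_contra hcon
      push_neg at hcon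
      have hR : 6 * δ + ε < |tq - tr| := by rw [← hdqr]; exact hcon
      -- contradiction from a well-placed point s on [q,r]
      have contr : ∀ s, s ∈ Icc (min tq tr) (max tq tr) →
          2 * δ + ε / 2 ≤ |s - tq| → 4 * δ + ε / 2 < |s - tr| → False := by
        intro s hs habs1 habs2
        have hsa_s : sa ≤ s := le_trans (le_min htq.1 htr.1) hs.1
        have hs_sb : s ≤ sb := le_trans hs.2 (max_le htq.2 htr.2)
        have hsL : s ∈ Icc (0:ℝ) (dist a b) := hIccsub ⟨hsa_s, hs_sb⟩
        have hdsq : dist (f s) q = |s - tq| := by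
          rw [← hftq]; exact hfiso _ hsL _ htqL
        have hdsr : dist (f s) r = |s - tr| := by
          rw [← hftr]; exact hfiso _ hsL _ htrL
        have hdxm : dist x q ≤ dist x (f s) := hxq_le_m s hsa_s hs_sb
        have hminf := hslim2 s hs
        have h2' : infDist (f s) (Grx ∪ Gxq) < δ + ε / 8 :=
          lt_of_le_of_lt hminf (by linarith)
        have hne2 : (Grx ∪ Gxq).Nonempty := ⟨x, Or.inl hGrx.right_mem⟩
        obtain ⟨y2, hy2, hdy2⟩ := (infDist_lt_iff hne2).mp h2'
        rcases hy2 with hy2 | hy2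
        · -- y2 on the side from r to x
          have hsum2 := hGrx.dist_add hy2
          have t1 : dist x (f s) ≤ dist x y2 + dist y2 (f s) := dist_triangle x y2 (f s)
          have t2 : dist (f s) r ≤ dist (f s) y2 + dist y2 r := dist_triangle (f s) y2 r
          have hrx : dist r x ≤ dist r p + dist p x := dist_triangle r p x
          have c1 : dist x y2 = dist y2 x := dist_comm x y2
          have c2 : dist y2 r = dist r y2 := dist_comm y2 r
          have c3 : dist r p = dist p r := dist_comm r p
          have c4 : dist p x = dist x p := dist_comm p x
          have c5 : dist y2 (f s) = dist (f s) y2 := dist_comm y2 (f s)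
          linarith
        · -- y2 on the side from x to q
          have hsum2 := hGxq.dist_add hy2
          have t1 : dist x (f s) ≤ dist x y2 + dist y2 (f s) := dist_triangle x y2 (f s)
          have t2 : dist (f s) q ≤ dist (f s) y2 + dist y2 q := dist_triangle (f s) y2 q
          have c5 : dist y2 (f s) = dist (f s) y2 := dist_comm y2 (f s)
          linarith
      rcases le_total tq tr with hord | hord
      · have hRo : 6 * δ + ε < tr - tq := by
          rw [abs_of_nonpos (by linarith)] at hR; linarith
        refine contr (tq + (2 * δ + ε / 2)) ⟨?_, ?_⟩ ?_ ?_
        · exact le_trans (min_le_left tq tr) (by linarith)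
        · exact le_trans (by linarith : tq + (2 * δ + ε / 2) ≤ tr) (le_max_right tq tr)
        · rw [show tq + (2 * δ + ε / 2) - tq = 2 * δ + ε / 2 by ring,
            abs_of_nonneg (by linarith)]
        · rw [abs_of_nonpos (by linarith : tq + (2 * δ + ε / 2) - tr ≤ 0)]
          linarith
      · have hRo : 6 * δ + ε < tq - tr := by
          rw [abs_of_nonneg (by linarith)] at hR; linarith
        refine contr (tq - (2 * δ + ε / 2)) ⟨?_, ?_⟩ ?_ ?_
        · exact le_trans (min_le_right tq tr) (by linarith)
        · exact le_trans (by linarith : tq - (2 * δ + ε / 2) ≤ tq) (le_max_left tq tr)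
        · rw [show tq - (2 * δ + ε / 2) - tq = -(2 * δ + ε / 2) by ring, abs_neg,
            abs_of_nonneg (by linarith)]
        · rw [abs_of_nonneg (by linarith : 0 ≤ tq - (2 * δ + ε / 2) - tr)]
          linarith
  have h6 : dist q r ≤ 6 * δ := by
    apply le_of_forall_pos_le_add
    intro ε hε
    exact main ε hε
  linarith
end

section
/- Let p be a nearest point on a geodesic [x,y] to the basepoint 1, and let r be a nearest point on a geodesic [1,x] to y. Then d(r,p) ≤ 21δ. -/
open Metric Set

section Helpers

variable {X : Type*} [MetricSpace X]

lemma IsGeodesic.left_mem_s9 {G : Set X} {x y : X} (hG : IsGeodesic G x y) : x ∈ G := by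
  obtain ⟨f, hf0, hfL, hiso, him⟩ := hG
  rw [← him]; exact ⟨0, ⟨le_rfl, dist_nonneg⟩, hf0⟩

lemma IsGeodesic.right_mem_s9 {G : Set X} {x y : X} (hG : IsGeodesic G x y) : y ∈ G := by
  obtain ⟨f, hf0, hfL, hiso, him⟩ := hG
  rw [← him]; exact ⟨dist x y, ⟨dist_nonneg, le_rfl⟩, hfL⟩

lemma IsGeodesic.exists_point {G : Set X} {x y : X} (hG : IsGeodesic G x y)
    (t : ℝ) (h0 : 0 ≤ t) (ht : t ≤ dist x y) :
    ∃ z ∈ G, dist x z = t ∧ dist z y = dist x y - t := by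
  obtain ⟨f, hf0, hfL, hiso, him⟩ := hG
  refine ⟨f t, ?_, ?_, ?_⟩
  · rw [← him]; exact ⟨t, ⟨h0, ht⟩, rfl⟩
  · have h := hiso 0 ⟨le_rfl, dist_nonneg⟩ t ⟨h0, ht⟩
    rw [hf0] at h
    rw [h, abs_of_nonpos (by linarith)]; ring
  · have h := hiso t ⟨h0, ht⟩ (dist x y) ⟨dist_nonneg, le_rfl⟩
    rw [hfL] at h
    rw [h, abs_of_nonpos (by linarith)]; ring

lemma IsGeodesic.dist_add_s9 {G : Set X} {x y z : X} (hG : IsGeodesic G x y) (hz : z ∈ G) :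
    dist x z + dist z y = dist x y := by
  obtain ⟨f, hf0, hfL, hiso, him⟩ := hG
  rw [← him] at hz
  obtain ⟨t, htI, rfl⟩ := hz
  have h1 := hiso 0 ⟨le_rfl, dist_nonneg⟩ t htI
  have h2 := hiso t htI (dist x y) ⟨dist_nonneg, le_rfl⟩
  rw [hf0] at h1; rw [hfL] at h2
  rw [h1, h2, abs_of_nonpos (by linarith [htI.1]), abs_of_nonpos (by linarith [htI.2])]
  ring

lemma IsGeodesic.dist_mem_mem {G : Set X} {x y a b : X} (hG : IsGeodesic G x y)
    (ha : a ∈ G) (hb : b ∈ G) : dist a b = |dist x a - dist x b| := by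
  obtain ⟨f, hf0, hfL, hiso, him⟩ := hG
  rw [← him] at ha hb
  obtain ⟨s, hsI, rfl⟩ := ha
  obtain ⟨t, htI, rfl⟩ := hb
  have h0s := hiso 0 ⟨le_rfl, dist_nonneg⟩ s hsI
  have h0t := hiso 0 ⟨le_rfl, dist_nonneg⟩ t htI
  rw [hf0] at h0s h0t
  have hs' : dist x (f s) = s := by rw [h0s, abs_of_nonpos (by linarith [hsI.1])]; ring
  have ht' : dist x (f t) = t := by rw [h0t, abs_of_nonpos (by linarith [htI.1])]; ring
  rw [hiso s hsI t htI, hs', ht']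

lemma IsGeodesic.symm {G : Set X} {x y : X} (hG : IsGeodesic G x y) : IsGeodesic G y x := by
  obtain ⟨f, hf0, hfL, hiso, him⟩ := hG
  have hc : dist y x = dist x y := dist_comm y x
  refine ⟨fun t => f (dist x y - t), ?_, ?_, ?_, ?_⟩
  · simp [hfL]
  · rw [hc]; simp [hf0]
  · intro s hs t ht
    rw [hc] at hs ht
    have h := hiso (dist x y - s) ⟨by linarith [hs.2], by linarith [hs.1]⟩
                 (dist x y - t) ⟨by linarith [ht.2], by linarith [ht.1]⟩
    rw [h, show dist x y - s - (dist x y - t) = t - s by ring, abs_sub_comm]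
  · rw [hc, ← him]
    rw [show (fun t => f (dist x y - t)) = f ∘ (fun t => dist x y - t) from rfl, Set.image_comp]
    congr 1
    rw [Set.image_const_sub_Icc]
    simp

lemma subseg_core {f : ℝ → X} {L : ℝ}
    (hiso : ∀ s ∈ Set.Icc (0:ℝ) L, ∀ t ∈ Set.Icc (0:ℝ) L, dist (f s) (f t) = |s - t|)
    {s t : ℝ} (hs : s ∈ Set.Icc (0:ℝ) L) (ht : t ∈ Set.Icc (0:ℝ) L) (hst : s ≤ t) :
    f '' Set.Icc s t ⊆ f '' Set.Icc 0 L ∧ IsGeodesic (f '' Set.Icc s t) (f s) (f t) := by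
  have hd : dist (f s) (f t) = t - s := by
    rw [hiso s hs t ht, abs_of_nonpos (by linarith)]; ring
  constructor
  · exact Set.image_mono (fun u hu => ⟨le_trans hs.1 hu.1, le_trans hu.2 ht.2⟩)
  · refine ⟨fun u => f (s + u), by simp, ?_, ?_, ?_⟩
    · show f (s + dist (f s) (f t)) = f t
      rw [hd, show s + (t - s) = t by ring]
    · intro u hu v hv
      rw [hd] at hu hv
      have h := hiso (s+u) ⟨by linarith [hu.1, hs.1], by linarith [hu.2, ht.2]⟩
                     (s+v) ⟨by linarith [hv.1, hs.1], by linarith [hv.2, ht.2]⟩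
      rw [h, show s + u - (s + v) = u - v by ring]
    · rw [hd]
      rw [show (fun u => f (s + u)) = f ∘ (fun u => s + u) from rfl, Set.image_comp]
      congr 1
      rw [Set.image_const_add_Icc]
      simp

lemma IsGeodesic.subseg {G : Set X} {x y : X} (hG : IsGeodesic G x y) {a b : X}
    (ha : a ∈ G) (hb : b ∈ G) : ∃ H, H ⊆ G ∧ IsGeodesic H a b := by
  obtain ⟨f, hf0, hfL, hiso, him⟩ := hG
  rw [← him] at ha hb
  obtain ⟨s, hsI, rfl⟩ := ha
  obtain ⟨t, htI, rfl⟩ := hb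
  rcases le_total s t with hst | hst
  · obtain ⟨h1, h2⟩ := subseg_core hiso hsI htI hst
    exact ⟨_, him ▸ h1, h2⟩
  · obtain ⟨h1, h2⟩ := subseg_core hiso htI hsI hst
    exact ⟨_, him ▸ h1, h2.symm⟩

lemma nearest_le {G : Set X} {e p : X} (hp : NearestPoint G e p) {z : X} (hz : z ∈ G) :
    dist e p ≤ dist e z := hp.2 ▸ Metric.infDist_le_dist_of_mem hz

lemma slim_exists {δ : ℝ} (hyp : SlimTriangles δ X) {x y z : X} {Gxy Gyz Gzx : Set X}
    (h1 : IsGeodesic Gxy x y) (h2 : IsGeodesic Gyz y z) (h3 : IsGeodesic Gzx z x)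
    {w : X} (hw : w ∈ Gxy) {ε : ℝ} (hε : 0 < ε) :
    ∃ u ∈ Gyz ∪ Gzx, dist w u < δ + ε := by
  have h : Metric.infDist w (Gyz ∪ Gzx) ≤ δ := hyp x y z Gxy Gyz Gzx h1 h2 h3 hw
  have hne : (Gyz ∪ Gzx).Nonempty := ⟨y, Or.inl h2.left_mem_s9⟩
  exact (Metric.infDist_lt_iff hne).mp (lt_of_le_of_lt h (by linarith))

lemma coarse_unique {δ : ℝ} (hδ : 0 ≤ δ) (hGeo : GeodesicSpace X) (hyp : SlimTriangles δ X)
    {G : Set X} {x y : X} (hG : IsGeodesic G x y) {e p v : X}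
    (hp : NearestPoint G e p) (hv : v ∈ G) {c : ℝ} (hc : 0 ≤ c)
    (hvc : dist e v ≤ dist e p + c) : dist p v ≤ 2 * c + 4 * δ := by
  obtain ⟨H, hHG, hH⟩ := hG.subseg hp.1 hv
  obtain ⟨m, hmH, hm1, hm2⟩ := hH.exists_point (dist p v / 2)
    (by positivity) (by linarith [dist_nonneg (x := p) (y := v)])
  obtain ⟨Gve, hGve⟩ := hGeo v e
  obtain ⟨Gep, hGep⟩ := hGeo e p
  apply le_of_forall_pos_le_add
  intro ε hε
  obtain ⟨u, hu, hdu⟩ := slim_exists hyp hH hGve hGep hmH (show 0 < ε/4 by linarith)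
  have hem : dist e p ≤ dist e m := nearest_le hp (hHG hmH)
  rcases hu with hu | hu
  · -- u ∈ Gve
    have hg : dist v u + dist u e = dist v e := hGve.dist_add_s9 hu
    have t1 := dist_triangle e u m
    have t2 := dist_triangle m u v
    have c1 : dist u m = dist m u := dist_comm u m
    have c2 : dist u e = dist e u := dist_comm u e
    have c3 : dist u v = dist v u := dist_comm u v
    have c4 : dist v e = dist e v := dist_comm v e
    linarith
  · -- u ∈ Gep
    have hg : dist e u + dist u p = dist e p := hGep.dist_add_s9 hu
    have t1 := dist_triangle e u m
    have t2 := dist_triangle p u m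
    have c1 : dist u m = dist m u := dist_comm u m
    have c2 : dist u p = dist p u := dist_comm u p
    linarith

lemma proj_lemma {δ : ℝ} (hδ : 0 ≤ δ) (hGeo : GeodesicSpace X) (hyp : SlimTriangles δ X)
    {G : Set X} {x y : X} (hG : IsGeodesic G x y) {e p : X} (hp : NearestPoint G e p)
    {z : X} (hz : z ∈ G) : dist e p + dist p z ≤ dist e z + 7 * δ := by
  obtain ⟨Gze, hGze⟩ := hGeo z e
  obtain ⟨Gep, hGep⟩ := hGeo e p
  obtain ⟨Hpz, hsub, hHpz⟩ := hG.subseg hp.1 hz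
  have hez : dist e p ≤ dist e z := nearest_le hp hz
  have hce : dist z e = dist e z := dist_comm z e
  obtain ⟨w, hwG, hw1, hw2⟩ := hGze.exists_point (dist z e - dist e p)
      (by linarith) (by linarith [dist_nonneg (x := e) (y := p)])
  apply le_of_forall_pos_le_add
  intro ε hε
  obtain ⟨u, hu, hdu⟩ := slim_exists hyp hGze hGep hHpz hwG (show 0 < ε/3 by linarith)
  have cwe : dist w e = dist e w := dist_comm w e
  have cwz : dist w z = dist z w := dist_comm w z
  have cwu : dist w u = dist u w := dist_comm w u
  rcases hu with hu | hu
  · -- u ∈ Gep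
    have hg : dist e u + dist u p = dist e p := hGep.dist_add_s9 hu
    have t1 := dist_triangle e u w
    have t2 := dist_triangle p u w
    have t3 := dist_triangle p w z
    have c1 : dist u p = dist p u := dist_comm u p
    have c2 : dist u w = dist w u := dist_comm u w
    linarith
  · -- u ∈ Hpz ⊆ G
    have huG : u ∈ G := hsub hu
    have t1 := dist_triangle e w u
    have hcu : dist e u ≤ dist e p + (δ + ε/3) := by linarith
    have hpu := coarse_unique hδ hGeo hyp hG hp huG (by linarith) hcu
    have t2 := dist_triangle p u z
    have t3 := dist_triangle u w z
    linarith

end Helpers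

/-- Let p be a nearest point on a geodesic [x,y] to the basepoint 1, and r
a nearest point on a geodesic [1,x] to y. Then d(r,p) ≤ 21δ. -/
theorem stmt_9 {X : Type*} [MetricSpace X] (δ : ℝ) (hδ : 0 ≤ δ)
    (hGeo : GeodesicSpace X) (hyp : SlimTriangles δ X)
    (e x y : X) (Gxy Gex : Set X)
    (hGxy : IsGeodesic Gxy x y) (hGex : IsGeodesic Gex e x)
    (p r : X) (hp : NearestPoint Gxy e p) (hr : NearestPoint Gex y r) :
    dist r p ≤ 21 * δ := by
  obtain ⟨Gye, hGye⟩ := hGeo y e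
  have P1 := proj_lemma hδ hGeo hyp hGxy hp hGxy.left_mem_s9
  have P2 := proj_lemma hδ hGeo hyp hGxy hp hGxy.right_mem_s9
  have P3 := proj_lemma hδ hGeo hyp hGex hr hGex.right_mem_s9
  have P4 := proj_lemma hδ hGeo hyp hGex hr hGex.left_mem_s9
  have G1 : dist x p + dist p y = dist x y := hGxy.dist_add_s9 hp.1
  have G2 : dist e r + dist r x = dist e x := hGex.dist_add_s9 hr.1
  have T1 := dist_triangle e p x
  have T2 := dist_triangle e p y
  have T3 := dist_triangle y r x
  have T4 := dist_triangle y r e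
  have C1 : dist p x = dist x p := dist_comm p x
  have C2 : dist y x = dist x y := dist_comm y x
  have C3 : dist r e = dist e r := dist_comm r e
  have C4 : dist y e = dist e y := dist_comm y e
  have C5 : dist p y = dist y p := dist_comm p y
  have C6 : dist r x = dist x r := dist_comm r x
  apply le_of_forall_pos_le_add
  intro ε hε
  have hε4 : 0 < ε/4 := by linarith
  obtain ⟨q, hq, hdq⟩ := slim_exists hyp hGxy hGye hGex hp.1 hε4
  obtain ⟨q', hq', hdq'⟩ := slim_exists hyp hGex hGxy hGye hr.1 hε4
  rcases hq with hq | hq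
  · -- q ∈ Gye
    rcases hq' with hq' | hq'
    · -- q' ∈ Gxy : use q' only
      have Gq' : dist x q' + dist q' y = dist x y := hGxy.dist_add_s9 hq'
      have Dpq' : dist p q' = |dist x p - dist x q'| := hGxy.dist_mem_mem hp.1 hq'
      have Tq1 := dist_triangle x r q'
      have Tq2 := dist_triangle x q' r
      have F : dist r p ≤ dist r q' + dist q' p := dist_triangle r q' p
      have Cq1 : dist q' p = dist p q' := dist_comm q' p
      have Cq2 : dist q' r = dist r q' := dist_comm q' r
      rcases abs_cases (dist x p - dist x q') with ⟨h1, h2⟩ | ⟨h1, h2⟩ <;>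
        rw [h1] at Dpq' <;> linarith
    · -- q ∈ Gye, q' ∈ Gye
      have Gq : dist y q + dist q e = dist y e := hGye.dist_add_s9 hq
      have Gq' : dist y q' + dist q' e = dist y e := hGye.dist_add_s9 hq'
      have Dqq' : dist q q' = |dist y q - dist y q'| := hGye.dist_mem_mem hq hq'
      have Tb1 := dist_triangle y q p
      have Tb2 := dist_triangle e q p
      have Tb3 := dist_triangle y r q'
      have Tb4 := dist_triangle y q' r
      have F1 := dist_triangle r q' p
      have F2 := dist_triangle q' q p
      have Cc1 : dist q p = dist p q := dist_comm q p
      have Cc2 : dist q e = dist e q := dist_comm q e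
      have Cc3 : dist q' q = dist q q' := dist_comm q' q
      have Cc4 : dist q' r = dist r q' := dist_comm q' r
      rcases abs_cases (dist y q - dist y q') with ⟨h1, h2⟩ | ⟨h1, h2⟩ <;>
        rw [h1] at Dqq' <;> linarith
  · -- q ∈ Gex : use q only
    have Gq : dist e q + dist q x = dist e x := hGex.dist_add_s9 hq
    have Dqr : dist q r = |dist e q - dist e r| := hGex.dist_mem_mem hq hr.1
    have Tq1 := dist_triangle e p q
    have Tq2 := dist_triangle e q p
    have F : dist r p ≤ dist r q + dist q p := dist_triangle r q p
    have Cq1 : dist q p = dist p q := dist_comm q p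
    have Cq2 : dist r q = dist q r := dist_comm r q
    rcases abs_cases (dist e q - dist e r) with ⟨h1, h2⟩ | ⟨h1, h2⟩ <;>
      rw [h1] at Dqr <;> linarith
end

section
/- Set K₇ = 112δ and K₆ = 2K₇ + 6δ. Let A > 0, let x be a point with ‖x‖ ≥ K₆ + 4A, and let y be a point on a geodesic [1,x] with ‖y‖ = ‖x‖ − 2K₇ − 2A. Then for any point b in the halfspace H(1,x) there is a point a in the halfspace H(y,1) with d(a,b) ≥ 2A such that H(y,1) ⊆ H(b,a). -/
open Metric Set

section Aux
variable {X : Type*} [MetricSpace X]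

theorem geo_mem_left {G : Set X} {x y : X} (h : IsGeodesic G x y) : x ∈ G := by
  obtain ⟨f, h0, hd, hiso, him⟩ := h
  rw [← him]
  exact ⟨0, ⟨le_refl 0, dist_nonneg⟩, h0⟩

theorem geo_point {G : Set X} {x y : X} (h : IsGeodesic G x y) {s : ℝ}
    (hs0 : 0 ≤ s) (hs1 : s ≤ dist x y) :
    ∃ z ∈ G, dist x z = s ∧ dist z y = dist x y - s := by
  obtain ⟨f, h0, hd, hiso, him⟩ := h
  refine ⟨f s, by rw [← him]; exact ⟨s, ⟨hs0, hs1⟩, rfl⟩, ?_, ?_⟩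
  · have h1 := hiso 0 ⟨le_refl 0, dist_nonneg⟩ s ⟨hs0, hs1⟩
    rw [h0] at h1
    rw [h1, zero_sub, abs_neg, abs_of_nonneg hs0]
  · have h2 := hiso s ⟨hs0, hs1⟩ (dist x y) ⟨dist_nonneg, le_refl _⟩
    rw [hd] at h2
    rw [h2, abs_of_nonpos (by linarith)]
    ring

theorem geo_add {G : Set X} {x y : X} (h : IsGeodesic G x y) {z : X} (hz : z ∈ G) :
    dist x z + dist z y = dist x y := by
  obtain ⟨f, h0, hd, hiso, him⟩ := h
  rw [← him] at hz
  obtain ⟨s, hs, rfl⟩ := hz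
  have h1 := hiso 0 ⟨le_refl 0, dist_nonneg⟩ s hs
  have h2 := hiso s hs (dist x y) ⟨dist_nonneg, le_refl _⟩
  rw [h0] at h1
  rw [hd] at h2
  rw [h1, h2, zero_sub, abs_neg, abs_of_nonneg hs.1, abs_of_nonpos (by linarith [hs.2])]
  ring

theorem geo_compact {G : Set X} {x y : X} (h : IsGeodesic G x y) : IsCompact G := by
  obtain ⟨f, h0, hd, hiso, him⟩ := h
  rw [← him]
  apply isCompact_Icc.image_of_continuousOn
  apply LipschitzOnWith.continuousOn (K := 1)
  intro s hs t ht
  rw [edist_dist, edist_dist, hiso s hs t ht]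
  simp [Real.dist_eq]

theorem near_pt {δ : ℝ} {S T : Set X} (hS : IsCompact S) (hT : IsCompact T)
    (hne : S.Nonempty) {z : X} (h : z ∈ nbhd δ (S ∪ T)) :
    ∃ u ∈ S ∪ T, dist z u ≤ δ := by
  obtain ⟨u, hu, he⟩ := (hS.union hT).exists_infDist_eq_dist
    (hne.mono subset_union_left) z
  exact ⟨u, hu, he ▸ h⟩

theorem exists_mid {δ : ℝ} (hGeo : GeodesicSpace X) (hyp : SlimTriangles δ X)
    (e p q : X) {Gpq : Set X} (hpq : IsGeodesic Gpq p q) :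
    ∃ z ∈ Gpq, 2 * dist e z ≤ dist p e + dist q e - dist p q + 4 * δ := by
  obtain ⟨Gqe, hqe⟩ := hGeo q e
  obtain ⟨Gep, hep⟩ := hGeo e p
  have c1 : dist e q = dist q e := dist_comm e q
  have c2 : dist e p = dist p e := dist_comm e p
  have h1 : 0 ≤ (dist p e + dist p q - dist e q) / 2 := by
    have := dist_triangle e p q; linarith
  have h2 : (dist p e + dist p q - dist e q) / 2 ≤ dist p q := by
    have := dist_triangle p q e
    have : dist q e = dist e q := dist_comm q e
    have := dist_triangle p q e; linarith [dist_triangle p q e, dist_comm q e]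
  obtain ⟨z, hzG, hz1, hz2⟩ := geo_point hpq h1 h2
  have hsub := hyp p q e Gpq Gqe Gep hpq hqe hep
  obtain ⟨u, hu, hdu⟩ := near_pt (geo_compact hqe) (geo_compact hep)
    ⟨q, geo_mem_left hqe⟩ (hsub hzG)
  refine ⟨z, hzG, ?_⟩
  cases hu with
  | inl h =>
    have hadd := geo_add hqe h
    have t1 := dist_triangle q u z
    have t2 := dist_triangle e u z
    linarith [dist_comm u z, dist_comm u e, dist_comm q z]
  | inr h =>
    have hadd := geo_add hep h
    have t1 := dist_triangle p u z
    have t2 := dist_triangle e u z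
    linarith [dist_comm u z, dist_comm u p]

theorem fourpoint {δ : ℝ} (hGeo : GeodesicSpace X) (hyp : SlimTriangles δ X)
    (e p q r : X) :
    min (dist p e + dist r e - dist p r) (dist r e + dist q e - dist r q)
      ≤ dist p e + dist q e - dist p q + 6 * δ := by
  obtain ⟨Gpq, hpq⟩ := hGeo p q
  obtain ⟨z, hz, hz2⟩ := exists_mid hGeo hyp e p q hpq
  obtain ⟨Gqr, hqr⟩ := hGeo q r
  obtain ⟨Grp, hrp⟩ := hGeo r p
  have hsub := hyp p q r Gpq Gqr Grp hpq hqr hrp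
  obtain ⟨u, hu, hdu⟩ := near_pt (geo_compact hqr) (geo_compact hrp)
    ⟨q, geo_mem_left hqr⟩ (hsub hz)
  have htz : dist e u ≤ dist e z + δ := by
    have := dist_triangle e z u; linarith
  cases hu with
  | inl h =>
    have hadd := geo_add hqr h
    refine le_trans (min_le_right _ _) ?_
    have t1 := dist_triangle q u e
    have t2 := dist_triangle r u e
    linarith [dist_comm u e, dist_comm u r, dist_comm r q]
  | inr h =>
    have hadd := geo_add hrp h
    refine le_trans (min_le_left _ _) ?_
    have t1 := dist_triangle p u e
    have t2 := dist_triangle r u e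
    linarith [dist_comm u e, dist_comm u p, dist_comm p r]

end Aux

/-- Set K₇ = 112δ and K₆ = 2K₇ + 6δ. Let A > 0, x with ‖x‖ ≥ K₆ + 4A, and
y a point on a geodesic [1,x] with ‖y‖ = ‖x‖ − 2K₇ − 2A. Then for any b ∈ H(1,x) there
is a ∈ H(y,1) with d(a,b) ≥ 2A such that H(y,1) ⊆ H(b,a). -/
theorem stmt_16 {X : Type*} [MetricSpace X] (δ : ℝ) (hδ : 0 ≤ δ)
    (hGeo : GeodesicSpace X) (hyp : SlimTriangles δ X)
    (e x : X) (A : ℝ) (hA : 0 < A)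
    (hx : (2 * (112 * δ) + 6 * δ) + 4 * A ≤ dist e x)
    (Gex : Set X) (hGex : IsGeodesic Gex e x)
    (y : X) (hy : y ∈ Gex) (hyd : dist e y = dist e x - 2 * (112 * δ) - 2 * A) :
    ∀ b ∈ Halfspace e x, ∃ a ∈ Halfspace y e,
      2 * A ≤ dist a b ∧ Halfspace y e ⊆ Halfspace b a := by
  intro b hb
  have hbx : dist b x ≤ dist b e := hb
  have hyx : dist e y + dist y x = dist e x := geo_add hGex hy
  have ht0 : 0 ≤ dist e y / 2 - A := by linarith
  have htL : dist e y / 2 - A ≤ dist e x := by linarith [dist_nonneg (x := e) (y := y)]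
  obtain ⟨a, haG, hea, hax⟩ := geo_point hGex ht0 htL
  have hLb : dist e x ≤ 2 * dist e b := by
    have := dist_triangle e b x
    linarith [dist_comm b e, dist_comm e b]
  refine ⟨a, ?_, ?_, ?_⟩
  · show dist a e ≤ dist a y
    have t1 := dist_triangle e a y
    linarith [dist_comm a e]
  · have t1 := dist_triangle e a b
    linarith
  · intro w hw
    have hw' : dist w e ≤ dist w y := hw
    show dist w a ≤ dist w b
    have F1 := fourpoint hGeo hyp e w y x
    have F2 := fourpoint hGeo hyp e w x b
    have F3 := fourpoint hGeo hyp e a b x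
    have F4 := fourpoint hGeo hyp e w a b
    have cye : dist y e = dist e y := dist_comm y e
    have cxe : dist x e = dist e x := dist_comm x e
    have cae : dist a e = dist e a := dist_comm a e
    have cbe : dist b e = dist e b := dist_comm b e
    have cxy : dist x y = dist y x := dist_comm x y
    have cxb : dist x b = dist b x := dist_comm x b
    have cba : dist b a = dist a b := dist_comm b a
    have cxa : dist x a = dist a x := dist_comm x a
    -- bound g(w,x)
    have hP : dist w e + dist x e - dist w x ≤ dist e y + 6 * δ := by
      rcases min_le_iff.mp F1 with h | h
      · linarith
      · linarith
    -- bound g(w,b)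
    have hQ : dist w e + dist b e - dist w b ≤ dist e y + 12 * δ := by
      rcases min_le_iff.mp F2 with h | h
      · linarith
      · linarith
    -- lower bound g(a,b)
    have hab : 2 * (dist e y / 2 - A) - 6 * δ ≤ dist a e + dist b e - dist a b := by
      rcases min_le_iff.mp F3 with h | h
      · linarith
      · linarith
    -- conclude
    rcases min_le_iff.mp F4 with h | h
    · linarith
    · linarith
end
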